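/- Let α > 0, λ ∈ [0,1], and μ ∈ [0,1] be reals with 1 - (1-λ)α^λ ≤ μ ≤ λα^(λ-1). Then for any reals x, y: ((1-μ)x + μy)² / α^(2λ) ≤ (1-λ)x² + λ y²/α². Equality holds if and only if λ ∈ {0,1}, or α = 1 and x = y, or x = y = 0. -/

import Mathlib

/-!
With `u = 1 - m`, `v = a m`, `A = a ^ l` and `y' = y / a`, the hypotheses on `m` read
`0 ≤ u ≤ (1 - l) A` and `0 ≤ v ≤ l A`, and the claim becomes
`(u x + v y')² ≤ A² ((1 - l) x² + l y'²)`. For `0 < l < 1`, `l (1 - l)` times the gap is a sum of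
three nonnegative terms. Equality kills all three; unless `x = y = 0` this forces `u = (1 - l) A`
and `v = l A`, so `(1 - l) a ^ l + l a ^ (l - 1) = u + v / a = 1`, which by the equality case of
Bernoulli's inequality happens only for `a = 1`.
-/

theorem eq_one_of_rpow_eq_one_add_mul {a p : ℝ} (ha : 0 < a) (hp0 : 0 < p) (hp1 : p < 1)
    (h : a ^ p = 1 + p * (a - 1)) : a = 1 := by
  by_contra ha1
  have hlt := rpow_one_add_lt_one_add_mul_self (s := a - 1) (by linarith)
    (sub_ne_zero.2 ha1) hp0 hp1
  rw [add_sub_cancel] at hlt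
  exact hlt.ne h

theorem eq_one_of_one_sub_mul_rpow_add_mul_rpow_sub_one_eq_one {a l : ℝ} (ha : 0 < a)
    (hl0 : 0 < l) (hl1 : l < 1) (h : (1 - l) * a ^ l + l * a ^ (l - 1) = 1) : a = 1 := by
  refine eq_one_of_rpow_eq_one_add_mul ha (sub_pos.2 hl1) (sub_lt_self 1 hl0) ?_
  have hmul : a ^ (1 - l) * a ^ l = a := by
    rw [← Real.rpow_add ha, sub_add_cancel, Real.rpow_one]
  have hmul' : a ^ (1 - l) * a ^ (l - 1) = 1 := by
    rw [← Real.rpow_add ha, sub_add_sub_cancel, sub_self, Real.rpow_zero]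
  calc a ^ (1 - l) = a ^ (1 - l) * ((1 - l) * a ^ l + l * a ^ (l - 1)) := by rw [h, mul_one]
    _ = (1 - l) * (a ^ (1 - l) * a ^ l) + l * (a ^ (1 - l) * a ^ (l - 1)) := by ring
    _ = 1 + (1 - l) * (a - 1) := by rw [hmul, hmul']; ring

section WeightedSquare

variable {l u v A x y : ℝ}

theorem mul_one_sub_mul_weighted_sq_gap :
    l * (1 - l) * (A ^ 2 * ((1 - l) * x ^ 2 + l * y ^ 2) - (u * x + v * y) ^ 2) =
      (l * u * x - (1 - l) * v * y) ^ 2 + l * (((1 - l) * A) ^ 2 - u ^ 2) * x ^ 2 +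
        (1 - l) * ((l * A) ^ 2 - v ^ 2) * y ^ 2 := by
  ring

theorem sq_mul_add_mul_le (hl0 : 0 < l) (hl1 : l < 1) (hu : 0 ≤ u) (hu' : u ≤ (1 - l) * A)
    (hv : 0 ≤ v) (hv' : v ≤ l * A) :
    (u * x + v * y) ^ 2 ≤ A ^ 2 * ((1 - l) * x ^ 2 + l * y ^ 2) := by
  have hu2 := sub_nonneg.2 (pow_le_pow_left₀ hu hu' 2)
  have hv2 := sub_nonneg.2 (pow_le_pow_left₀ hv hv' 2)
  have hl1' : 0 < 1 - l := sub_pos.2 hl1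
  have hgap : 0 ≤ l * (1 - l) * (A ^ 2 * ((1 - l) * x ^ 2 + l * y ^ 2) - (u * x + v * y) ^ 2) := by
    rw [mul_one_sub_mul_weighted_sq_gap]
    positivity
  exact sub_nonneg.1 (nonneg_of_mul_nonneg_right hgap (by positivity))

theorem eq_of_sq_mul_add_mul_eq (hl0 : 0 < l) (hl1 : l < 1) (hu : 0 ≤ u) (hu' : u ≤ (1 - l) * A)
    (hv : 0 ≤ v) (hv' : v ≤ l * A)
    (h : (u * x + v * y) ^ 2 = A ^ 2 * ((1 - l) * x ^ 2 + l * y ^ 2)) :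
    l * u * x = (1 - l) * v * y ∧ ((1 - l) * A = u ∨ x = 0) ∧ (l * A = v ∨ y = 0) := by
  have hu2 := sub_nonneg.2 (pow_le_pow_left₀ hu hu' 2)
  have hv2 := sub_nonneg.2 (pow_le_pow_left₀ hv hv' 2)
  have hl1' : 0 < 1 - l := sub_pos.2 hl1
  have hgap := (mul_one_sub_mul_weighted_sq_gap (l := l) (u := u) (v := v) (A := A) (x := x)
    (y := y)).symm
  rw [h, sub_self, mul_zero] at hgap
  obtain ⟨hPQ, hR⟩ := (add_eq_zero_iff_of_nonneg (by positivity) (by positivity)).1 hgap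
  obtain ⟨hP, hQ⟩ := (add_eq_zero_iff_of_nonneg (by positivity) (by positivity)).1 hPQ
  have hA : 0 ≤ (1 - l) * A := hu.trans hu'
  have hA' : 0 ≤ l * A := hv.trans hv'
  refine ⟨sub_eq_zero.1 (pow_eq_zero_iff two_ne_zero |>.1 hP), ?_, ?_⟩
  · simpa [hl0.ne', sub_eq_zero, pow_left_inj₀ hA hu two_ne_zero] using hQ
  · simpa [hl1'.ne', sub_eq_zero, pow_left_inj₀ hA' hv two_ne_zero] using hR

end WeightedSquare

theorem eq_one_and_eq_or_eq_zero_of_weighted_sq_eq {a l m x y : ℝ} (ha : 0 < a) (hl0 : 0 < l)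
    (hl1 : l < 1) (hxy' : l * (1 - m) * x = (1 - l) * (a * m) * (y / a))
    (hx : (1 - l) * a ^ l = 1 - m ∨ x = 0) (hy : l * a ^ l = a * m ∨ y / a = 0) :
    (a = 1 ∧ x = y) ∨ (x = 0 ∧ y = 0) := by
  have hxy : l * (1 - m) * x = (1 - l) * m * y := by
    rw [hxy']
    field_simp
  have hal : 0 < a ^ l := Real.rpow_pos_of_pos ha l
  have hl1' : 0 < 1 - l := sub_pos.2 hl1
  rcases hy with hm | hy
  · have hm : m = l * a ^ (l - 1) := by
      rw [Real.rpow_sub_one ha.ne', mul_div_assoc', hm]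
      field_simp
    rcases hx with hu | rfl
    · obtain rfl : a = 1 :=
        eq_one_of_one_sub_mul_rpow_add_mul_rpow_sub_one_eq_one ha hl0 hl1 (by linarith)
      obtain rfl : m = l := by simpa using hm
      refine Or.inl ⟨rfl, mul_left_cancel₀ (mul_pos hl0 hl1').ne' ?_⟩
      linarith
    · have hm0 : 0 < m := by rw [hm]; positivity
      have : (1 - l) * m * y = 0 := by simpa using hxy.symm
      exact Or.inr ⟨rfl, by simpa [hl1'.ne', hm0.ne'] using this⟩
  · obtain rfl : y = 0 := by simpa [ha.ne'] using hy
    rcases hx with hu | rfl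
    · have hu0 : 0 < 1 - m := hu ▸ mul_pos hl1' hal
      exact Or.inr ⟨by simpa [hl0.ne', hu0.ne'] using hxy, rfl⟩
    · exact Or.inr ⟨rfl, rfl⟩

theorem stmt_3 (a l m : ℝ) (ha : 0 < a) (hl : l ∈ Set.Icc (0:ℝ) 1)
    (hm : m ∈ Set.Icc (0:ℝ) 1) (hm1 : 1 - (1 - l) * a ^ l ≤ m) (hm2 : m ≤ l * a ^ (l - 1))
    (x y : ℝ) :
    ((1 - m) * x + m * y) ^ 2 / a ^ (2 * l) ≤ (1 - l) * x ^ 2 + l * y ^ 2 / a ^ 2 ∧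
      (((1 - m) * x + m * y) ^ 2 / a ^ (2 * l) = (1 - l) * x ^ 2 + l * y ^ 2 / a ^ 2 ↔
        (l = 0 ∨ l = 1) ∨ (a = 1 ∧ x = y) ∨ (x = 0 ∧ y = 0)) := by
  obtain ⟨hl0, hl1⟩ := hl
  obtain ⟨hm0, hm1'⟩ := hm
  rcases hl0.eq_or_lt with rfl | hl0
  · obtain rfl : m = 0 := le_antisymm (by simpa using hm2) hm0
    simp
  rcases hl1.eq_or_lt with rfl | hl1
  · obtain rfl : m = 1 := le_antisymm hm1' (by simpa using hm1)
    simp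
  have hpow : a ^ (2 * l) = (a ^ l) ^ 2 := by
    rw [mul_comm, Real.rpow_mul ha.le, Real.rpow_two]
  have hcomb : (1 - m) * x + m * y = (1 - m) * x + a * m * (y / a) := by
    field_simp
  have hrhs : l * y ^ 2 / a ^ 2 = l * (y / a) ^ 2 := by ring
  have hu : 1 - m ≤ (1 - l) * a ^ l := by linarith
  have hv : a * m ≤ l * a ^ l := by
    calc a * m ≤ a * (l * a ^ (l - 1)) := mul_le_mul_of_nonneg_left hm2 ha.le
      _ = l * a ^ l := by rw [Real.rpow_sub_one ha.ne']; field_simp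
  rw [hpow, hcomb, hrhs, div_le_iff₀ (by positivity), div_eq_iff (by positivity),
    mul_comm _ ((a ^ l) ^ 2)]
  refine ⟨sq_mul_add_mul_le hl0 hl1 (sub_nonneg.2 hm1') hu (by positivity) hv,
    fun h => Or.inr ?_, ?_⟩
  · obtain ⟨hxy, hx, hy⟩ :=
      eq_of_sq_mul_add_mul_eq hl0 hl1 (sub_nonneg.2 hm1') hu (by positivity) hv h
    exact eq_one_and_eq_or_eq_zero_of_weighted_sq_eq ha hl0 hl1 hxy hx hy
  · rintro ((rfl | rfl) | ⟨rfl, rfl⟩ | ⟨rfl, rfl⟩)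
    · exact absurd rfl hl0.ne'
    · exact absurd rfl hl1.ne
    · obtain rfl : m = l := by
        simp only [Real.one_rpow, mul_one] at hm1 hm2
        linarith
      simp only [Real.one_rpow]
      ring
    · ring
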